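/- (Sandwich bound for the Nash-Iteration operator under a globally optimal oracle.) Fix vectors h_i, h'_i : S → ℝ for each agent i and define Q_i(s,a,h_i) = r_i(s,a) + σ_{𝒫^a_s}(h_i). Suppose π is a product policy such that for every s, every agent i, and every product distribution ρ on A, ∑_a π(a|s) Q_i(s,a,h_i) ≥ ∑_a ρ(a) Q_i(s,a,h_i), and suppose π' satisfies the analogous property with h'_i in place of h_i. Define T_i(h)(s) = ∑_a π(a|s) Q_i(s,a,h_i) and T_i(h')(s) = ∑_a π'(a|s) Q_i(s,a,h'_i). Then for every agent i and every state s: min_{a∈A} ( σ_{𝒫^a_s}(h_i) − σ_{𝒫^a_s}(h'_i) ) ≤ T_i(h)(s) − T_i(h')(s) ≤ max_{a∈A} ( σ_{𝒫^a_s}(h_i) − σ_{𝒫^a_s}(h'_i) ). -/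

import Mathlib

open scoped BigOperators

/-- Support function `σ_Q(V) = min_{p ∈ Q} ∑_{s'} p(s') V(s')` (as an infimum,
which is attained when `Q` is nonempty and compact). -/
noncomputable def suppF {S : Type*} [Fintype S] (Q : Set (S → ℝ)) (V : S → ℝ) : ℝ :=
  sInf ((fun p => ∑ s', p s' * V s') '' Q)

/-- The joint policy `π(a|s) = ∏ i π_i(a_i|s)` of a product policy. -/
noncomputable def jointPol {S : Type*} {N : ℕ} {A : Fin N → Type*}
    (π : ∀ i, S → A i → ℝ) : S → (∀ i, A i) → ℝ :=
  fun s a => ∏ i, π i s (a i)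

/-!
Each of `π`, `π'` is a best response for its own value vector, so playing the
other's policy can only lower the value. Hence `T(h) - T(h')` is at least the `π'`-average
and at most the `π`-average of `Q(·, h) - Q(·, h')`, in which the rewards cancel; an average
lies between the minimum and the maximum of `σ(h) - σ(h')`.
-/

section WeightedAverage

variable {X : Type*} [Fintype X] {w : X → ℝ}

theorem ciInf_le_sum_mul (hw : w ∈ stdSimplex ℝ X) (d : X → ℝ) :
    ⨅ x, d x ≤ ∑ x, w x * d x :=
  calc ⨅ x, d x = ∑ x, w x * ⨅ y, d y := by rw [← Finset.sum_mul, hw.2, one_mul]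
    _ ≤ ∑ x, w x * d x := Finset.sum_le_sum fun x _ =>
        mul_le_mul_of_nonneg_left (ciInf_le (Set.finite_range d).bddBelow x) (hw.1 x)

theorem sum_mul_le_ciSup (hw : w ∈ stdSimplex ℝ X) (d : X → ℝ) :
    ∑ x, w x * d x ≤ ⨆ x, d x :=
  calc ∑ x, w x * d x ≤ ∑ x, w x * ⨆ y, d y := Finset.sum_le_sum fun x _ =>
        mul_le_mul_of_nonneg_left (le_ciSup (Set.finite_range d).bddAbove x) (hw.1 x)
    _ = ⨆ x, d x := by rw [← Finset.sum_mul, hw.2, one_mul]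

theorem sum_mul_sub_sum_mul (w Q Q' : X → ℝ) :
    ∑ x, w x * Q x - ∑ x, w x * Q' x = ∑ x, w x * (Q x - Q' x) := by
  simp only [mul_sub, Finset.sum_sub_distrib]

variable {w' Q Q' : X → ℝ}

theorem ciInf_sub_le_of_best_response (hw' : w' ∈ stdSimplex ℝ X)
    (hQ : ∑ x, w' x * Q x ≤ ∑ x, w x * Q x) :
    ⨅ x, (Q x - Q' x) ≤ ∑ x, w x * Q x - ∑ x, w' x * Q' x :=
  calc ⨅ x, (Q x - Q' x) ≤ ∑ x, w' x * (Q x - Q' x) := ciInf_le_sum_mul hw' _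
    _ = ∑ x, w' x * Q x - ∑ x, w' x * Q' x := (sum_mul_sub_sum_mul w' Q Q').symm
    _ ≤ ∑ x, w x * Q x - ∑ x, w' x * Q' x := sub_le_sub_right hQ _

theorem le_ciSup_sub_of_best_response (hw : w ∈ stdSimplex ℝ X)
    (hQ' : ∑ x, w x * Q' x ≤ ∑ x, w' x * Q' x) :
    ∑ x, w x * Q x - ∑ x, w' x * Q' x ≤ ⨆ x, (Q x - Q' x) :=
  calc ∑ x, w x * Q x - ∑ x, w' x * Q' x ≤ ∑ x, w x * Q x - ∑ x, w x * Q' x :=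
        sub_le_sub_left hQ' _
    _ = ∑ x, w x * (Q x - Q' x) := sum_mul_sub_sum_mul w Q Q'
    _ ≤ ⨆ x, (Q x - Q' x) := sum_mul_le_ciSup hw _

end WeightedAverage

theorem jointPol_mem_stdSimplex {S : Type*} {N : ℕ} {A : Fin N → Type*} [∀ i, Fintype (A i)]
    (π : ∀ i, S → A i → ℝ) (s : S) (hπ : ∀ i, π i s ∈ stdSimplex ℝ (A i)) :
    jointPol π s ∈ stdSimplex ℝ (∀ i, A i) := by
  refine ⟨fun a => Finset.prod_nonneg fun i _ => (hπ i).1 (a i), ?_⟩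
  unfold jointPol
  rw [← Fintype.piFinset_univ, ← Finset.prod_univ_sum]
  exact Finset.prod_eq_one fun i _ => (hπ i).2

theorem stmt14_general {S : Type*} [Fintype S]
    {N : ℕ} (A : Fin N → Type*) [∀ i, Fintype (A i)]
    (r : Fin N → S → (∀ i, A i) → ℝ)
    (U : S → (∀ i, A i) → Set (S → ℝ))
    (h h' : Fin N → S → ℝ)
    (π π' : ∀ i, S → A i → ℝ)
    (hπ : ∀ i s, π i s ∈ stdSimplex ℝ (A i))
    (hπ' : ∀ i s, π' i s ∈ stdSimplex ℝ (A i))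
    (hopt : ∀ (s : S) (i : Fin N) (ρ : ∀ j, A j → ℝ),
      (∀ j, ρ j ∈ stdSimplex ℝ (A j)) →
      ∑ a : (∀ j, A j), jointPol π s a * (r i s a + suppF (U s a) (h i))
        ≥ ∑ a : (∀ j, A j), (∏ j, ρ j (a j)) * (r i s a + suppF (U s a) (h i)))
    (hopt' : ∀ (s : S) (i : Fin N) (ρ : ∀ j, A j → ℝ),
      (∀ j, ρ j ∈ stdSimplex ℝ (A j)) →
      ∑ a : (∀ j, A j), jointPol π' s a * (r i s a + suppF (U s a) (h' i))
        ≥ ∑ a : (∀ j, A j), (∏ j, ρ j (a j)) * (r i s a + suppF (U s a) (h' i))) :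
    ∀ (i : Fin N) (s : S),
      (⨅ a : (∀ j, A j), (suppF (U s a) (h i) - suppF (U s a) (h' i)))
        ≤ (∑ a : (∀ j, A j), jointPol π s a * (r i s a + suppF (U s a) (h i)))
          - (∑ a : (∀ j, A j), jointPol π' s a * (r i s a + suppF (U s a) (h' i)))
      ∧ (∑ a : (∀ j, A j), jointPol π s a * (r i s a + suppF (U s a) (h i)))
          - (∑ a : (∀ j, A j), jointPol π' s a * (r i s a + suppF (U s a) (h' i)))
        ≤ ⨆ a : (∀ j, A j), (suppF (U s a) (h i) - suppF (U s a) (h' i)) := by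
  intro i s
  have hrewards : ∀ a, (r i s a + suppF (U s a) (h i)) - (r i s a + suppF (U s a) (h' i))
      = suppF (U s a) (h i) - suppF (U s a) (h' i) := fun a => add_sub_add_left_eq_sub _ _ _
  simp only [← hrewards]
  exact ⟨ciInf_sub_le_of_best_response (jointPol_mem_stdSimplex π' s (hπ' · s))
      (hopt s i _ (hπ' · s)),
    le_ciSup_sub_of_best_response (jointPol_mem_stdSimplex π s (hπ · s))
      (hopt' s i _ (hπ · s))⟩

/-- **Sandwich bound for the Nash-Iteration operator under a
globally optimal oracle.** -/
theorem stmt14 {S : Type*} [Fintype S] [DecidableEq S] [Nonempty S]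
    {N : ℕ} (A : Fin N → Type*) [∀ i, Fintype (A i)] [∀ i, Nonempty (A i)]
    (r : Fin N → S → (∀ i, A i) → ℝ)
    (hr : ∀ i s a, r i s a ∈ Set.Icc (0 : ℝ) 1)
    (U : S → (∀ i, A i) → Set (S → ℝ))
    (hU : ∀ s a, (U s a).Nonempty ∧ IsCompact (U s a) ∧ U s a ⊆ stdSimplex ℝ S)
    (h h' : Fin N → S → ℝ)
    (π π' : ∀ i, S → A i → ℝ)
    (hπ : ∀ i s, π i s ∈ stdSimplex ℝ (A i))
    (hπ' : ∀ i s, π' i s ∈ stdSimplex ℝ (A i))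
    (hopt : ∀ (s : S) (i : Fin N) (ρ : ∀ j, A j → ℝ),
      (∀ j, ρ j ∈ stdSimplex ℝ (A j)) →
      ∑ a : (∀ j, A j), jointPol π s a * (r i s a + suppF (U s a) (h i))
        ≥ ∑ a : (∀ j, A j), (∏ j, ρ j (a j)) * (r i s a + suppF (U s a) (h i)))
    (hopt' : ∀ (s : S) (i : Fin N) (ρ : ∀ j, A j → ℝ),
      (∀ j, ρ j ∈ stdSimplex ℝ (A j)) →
      ∑ a : (∀ j, A j), jointPol π' s a * (r i s a + suppF (U s a) (h' i))
        ≥ ∑ a : (∀ j, A j), (∏ j, ρ j (a j)) * (r i s a + suppF (U s a) (h' i))) :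
    ∀ (i : Fin N) (s : S),
      (⨅ a : (∀ j, A j), (suppF (U s a) (h i) - suppF (U s a) (h' i)))
        ≤ (∑ a : (∀ j, A j), jointPol π s a * (r i s a + suppF (U s a) (h i)))
          - (∑ a : (∀ j, A j), jointPol π' s a * (r i s a + suppF (U s a) (h' i)))
      ∧ (∑ a : (∀ j, A j), jointPol π s a * (r i s a + suppF (U s a) (h i)))
          - (∑ a : (∀ j, A j), jointPol π' s a * (r i s a + suppF (U s a) (h' i)))
        ≤ ⨆ a : (∀ j, A j), (suppF (U s a) (h i) - suppF (U s a) (h' i)) :=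
  stmt14_general A r U h h' π π' hπ hπ' hopt hopt'
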